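/- Let P be a Markov kernel satisfying the uniform mixing bound ‖P^t(·|x) − μ(·)‖_TV ≤ 2(1 − 1/τ)^t for all states x and integers t ≥ 0, where μ is the stationary distribution and τ ≥ 1. Let g be a bounded measurable function with μ(g) = 0, ‖g‖_∞ < ∞ and ‖g‖_μ > 0. Then ∑_{t=0}^{∞} ‖P^t g‖_μ ≤ τ ‖g‖_μ ( 2 + log( ‖g‖_∞ / ‖g‖_μ ) ). -/

import Mathlib

open MeasureTheory ProbabilityTheory Finset

/-- `k`-step iterate of a Markov kernel. -/
noncomputable def kpow {X : Type*} [MeasurableSpace X] (P : Kernel X X) : ℕ → Kernel X X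
  | 0 => Kernel.id
  | n + 1 => (kpow P n).comp P

/-- Action of the `n`-step kernel on a function: `(Pⁿ g)(x) = ∫ g dPⁿ(·|x)`. -/
noncomputable def kact {X : Type*} [MeasurableSpace X] (P : Kernel X X) (n : ℕ)
    (g : X → ℝ) : X → ℝ :=
  fun x => ∫ y, g y ∂(kpow P n x)

section Aux

variable {X : Type*} [MeasurableSpace X]

instance kpow_isMarkov (P : Kernel X X) [IsMarkovKernel P] (n : ℕ) :
    IsMarkovKernel (kpow P n) := by
  induction n with
  | zero => rw [kpow]; infer_instance
  | succ n ih => rw [kpow]; infer_instance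

lemma bind_kpow (P : Kernel X X) [IsMarkovKernel P] (μ : Measure X)
    (hstat : μ.bind (fun x => P x) = μ) (n : ℕ) :
    μ.bind (fun x => kpow P n x) = μ := by
  induction n with
  | zero =>
      have : (fun x => kpow P 0 x) = fun x => Measure.dirac x := by
        funext x; rw [kpow, Kernel.id_apply]
      rw [this]
      exact Measure.bind_dirac
  | succ n ih =>
      have h1 : (fun x => kpow P (n+1) x) = fun x => (P x).bind (fun y => kpow P n y) := by
        funext x
        rw [kpow, Kernel.comp_apply]
      rw [h1, ← Measure.bind_bind P.measurable.aemeasurable (kpow P n).measurable.aemeasurable, hstat, ih]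

lemma integrable_of_bdd {ν : Measure X} [IsFiniteMeasure ν] {f : X → ℝ} (hf : Measurable f)
    {C : ℝ} (h : ∀ x, |f x| ≤ C) : Integrable f ν :=
  Integrable.mono' (integrable_const C) hf.aestronglyMeasurable
    (Filter.Eventually.of_forall fun x => by simpa [Real.norm_eq_abs] using h x)

lemma sq_integral_le_integral_sq {ν : Measure X} [IsProbabilityMeasure ν] {f : X → ℝ}
    (hf : Measurable f) {C : ℝ} (hb : ∀ x, |f x| ≤ C) :
    (∫ x, f x ∂ν) ^ 2 ≤ ∫ x, (f x) ^ 2 ∂ν := by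
  have hint : Integrable f ν := integrable_of_bdd hf hb
  have hint2 : Integrable (fun x => (f x) ^ 2) ν := by
    refine integrable_of_bdd (hf.pow_const 2) (C := C ^ 2) fun x => ?_
    have h1 := hb x
    have h2 := abs_nonneg (f x)
    rw [abs_pow]
    nlinarith
  set c := ∫ x, f x ∂ν with hc
  have h0 : 0 ≤ ∫ x, (f x - c) ^ 2 ∂ν := integral_nonneg fun x => sq_nonneg _
  have hexp : ∫ x, (f x - c) ^ 2 ∂ν = ∫ x, (f x) ^ 2 ∂ν - c ^ 2 := by
    have heq : ∀ x, (f x - c) ^ 2 = (f x) ^ 2 - (2 * c) * f x + c ^ 2 := fun x => by ring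
    simp_rw [heq]
    have h_a : Integrable (fun x => f x ^ 2 - 2 * c * f x) ν :=
      hint2.sub (hint.const_mul (2 * c))
    rw [integral_add h_a (integrable_const _),
      integral_sub hint2 (hint.const_mul (2 * c)), integral_const_mul, integral_const]
    simp [measure_univ, ← hc]
    ring
  linarith

lemma kact_measurable (P : Kernel X X) [IsMarkovKernel P] (t : ℕ) {g : X → ℝ}
    (hg : Measurable g) : Measurable (kact P t g) := by
  have h : StronglyMeasurable fun x => ∫ y, (fun p : X × X => g p.2) (x, y) ∂(kpow P t x) :=
    StronglyMeasurable.integral_kernel_prod_right'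
      ((hg.comp measurable_snd).stronglyMeasurable)
  exact h.measurable

lemma kact_abs_le (P : Kernel X X) [IsMarkovKernel P] (t : ℕ) {g : X → ℝ}
    (hg : Measurable g) {C : ℝ} (hC : ∀ x, |g x| ≤ C) (x : X) : |kact P t g x| ≤ C := by
  have h1 : ‖∫ y, g y ∂(kpow P t x)‖ ≤ ∫ y, ‖g y‖ ∂(kpow P t x) :=
    norm_integral_le_integral_norm g
  have h2 : ∫ y, ‖g y‖ ∂(kpow P t x) ≤ ∫ y, C ∂(kpow P t x) := by
    refine integral_mono ((integrable_of_bdd hg hC).norm) (integrable_const C) fun y => ?_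
    simpa [Real.norm_eq_abs] using hC y
  have h3 : ∫ y, C ∂(kpow P t x) = C := by simp
  rw [kact]
  simp only [Real.norm_eq_abs] at h1 h2
  linarith

end Aux

section Main

variable {X : Type*} [MeasurableSpace X]

/-- L² contraction under the stationary measure. -/
lemma kact_sq_integral_le (P : Kernel X X) [IsMarkovKernel P] (μ : Measure X)
    [IsProbabilityMeasure μ] (hstat : μ.bind (fun x => P x) = μ) (t : ℕ)
    {g : X → ℝ} (hg : Measurable g) {C : ℝ} (hC : ∀ x, |g x| ≤ C) :
    ∫ x, (kact P t g x) ^ 2 ∂μ ≤ ∫ x, (g x) ^ 2 ∂μ := by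
  have hsq : Measurable fun y => (g y) ^ 2 := hg.pow_const 2
  have hb2 : ∀ y, |(g y) ^ 2| ≤ C ^ 2 := by
    intro y
    have h1 := hC y
    have h2 := abs_nonneg (g y)
    rw [abs_pow]
    nlinarith
  set φ : X → ENNReal := fun y => ENNReal.ofReal ((g y) ^ 2) with hφ
  have hφm : Measurable φ := hsq.ennreal_ofReal
  have hφle : ∀ y, φ y ≤ ENNReal.ofReal (C ^ 2) := fun y => by
    refine ENNReal.ofReal_le_ofReal ?_
    exact (le_abs_self _).trans (hb2 y)
  have hlint_ne : ∀ (ν : Measure X) [IsProbabilityMeasure ν], ∫⁻ y, φ y ∂ν ≠ ⊤ := by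
    intro ν hν
    have : ∫⁻ y, φ y ∂ν ≤ ∫⁻ _, ENNReal.ofReal (C ^ 2) ∂ν :=
      lintegral_mono fun y => hφle y
    rw [lintegral_const, measure_univ, mul_one] at this
    exact ne_top_of_le_ne_top ENNReal.ofReal_ne_top this
  have hrepr : ∀ (ν : Measure X) [IsProbabilityMeasure ν],
      ∫ y, (g y) ^ 2 ∂ν = (∫⁻ y, φ y ∂ν).toReal := by
    intro ν hν
    exact integral_eq_lintegral_of_nonneg_ae (Filter.Eventually.of_forall fun y => sq_nonneg _)
      hsq.aestronglyMeasurable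
  set F : X → ℝ := fun x => ∫ y, (g y) ^ 2 ∂(kpow P t x) with hF
  have hFval : ∀ x, F x = (∫⁻ y, φ y ∂(kpow P t x)).toReal := fun x => hrepr _
  have hFnn : ∀ x, 0 ≤ F x := fun x => integral_nonneg fun y => sq_nonneg _
  have hFm : Measurable F := by
    have : Measurable fun x => (∫⁻ y, φ y ∂(kpow P t x)).toReal := by
      refine Measurable.ennreal_toReal ?_
      exact Measurable.lintegral_kernel_prod_right (hφm.comp measurable_snd)
    simpa [funext hFval] using this
  have hpt : ∀ x, (kact P t g x) ^ 2 ≤ F x := by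
    intro x
    exact sq_integral_le_integral_sq hg hC
  have hkb : ∀ x, |(kact P t g x) ^ 2| ≤ C ^ 2 := by
    intro x
    have h1 := kact_abs_le P t hg hC x
    have h2 := abs_nonneg (kact P t g x)
    rw [abs_pow]
    nlinarith
  have hFb : ∀ x, |F x| ≤ C ^ 2 := by
    intro x
    rw [abs_of_nonneg (hFnn x)]
    have : F x ≤ ∫ y, C ^ 2 ∂(kpow P t x) :=
      integral_mono (integrable_of_bdd hsq hb2) (integrable_const _)
        (fun y => (le_abs_self _).trans (hb2 y))
    simpa using this
  have step1 : ∫ x, (kact P t g x) ^ 2 ∂μ ≤ ∫ x, F x ∂μ :=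
    integral_mono (integrable_of_bdd ((kact_measurable P t hg).pow_const 2) hkb)
      (integrable_of_bdd hFm hFb) hpt
  have step2 : ∫ x, F x ∂μ = ∫ x, (g x) ^ 2 ∂μ := by
    have h1 : ∫ x, F x ∂μ = (∫⁻ x, ENNReal.ofReal (F x) ∂μ).toReal :=
      integral_eq_lintegral_of_nonneg_ae (Filter.Eventually.of_forall hFnn)
        hFm.aestronglyMeasurable
    have h2 : ∀ x, ENNReal.ofReal (F x) = ∫⁻ y, φ y ∂(kpow P t x) := by
      intro x
      rw [hFval x, ENNReal.ofReal_toReal (hlint_ne _)]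
    have h3 : ∫⁻ x, ∫⁻ y, φ y ∂(kpow P t x) ∂μ = ∫⁻ y, φ y ∂(μ.bind fun x => kpow P t x) :=
      (Measure.lintegral_bind (kpow P t).measurable.aemeasurable hφm.aemeasurable).symm
    rw [h1]
    simp_rw [h2]
    rw [h3, bind_kpow P μ hstat t, ← hrepr μ]
  linarith

/-- TV mixing bound transferred to functions. -/
lemma kact_abs_le_mix (P : Kernel X X) [IsMarkovKernel P] (μ : Measure X)
    [IsProbabilityMeasure μ] {τ : ℝ} (hτ : 1 ≤ τ)
    (hmix : ∀ (x : X) (t : ℕ) (A : Set X), MeasurableSet A →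
      |((kpow P t) x A).toReal - (μ A).toReal| ≤ (1 - 1 / τ) ^ t)
    {g : X → ℝ} (hg : Measurable g) (hg0 : ∫ x, g x ∂μ = 0)
    {C : ℝ} (hC : ∀ x, |g x| ≤ C) (hC0 : 0 ≤ C) (t : ℕ) (x : X) :
    |kact P t g x| ≤ 2 * C * (1 - 1 / τ) ^ t := by
  have hτ0 : 0 < τ := lt_of_lt_of_le one_pos hτ
  set ν : Measure X := kpow P t x with hν
  set q : ℝ := (1 - 1 / τ) ^ t with hq
  have hq0 : 0 ≤ q := by
    apply pow_nonneg
    have : 1 / τ ≤ 1 := (div_le_one hτ0).2 hτ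
    linarith
  set h : X → ℝ := fun y => g y + C with hh_def
  have hh : Measurable h := hg.add_const C
  have hh0 : ∀ y, 0 ≤ h y := fun y => by
    have := (abs_le.1 (hC y)).1; simp only [hh_def]; linarith
  have hhb : ∀ y, h y ≤ 2 * C := fun y => by
    have := (abs_le.1 (hC y)).2; simp only [hh_def]; linarith
  have hhabs : ∀ y, |h y| ≤ 2 * C := fun y => abs_le.2 ⟨by linarith [hh0 y, hC0], hhb y⟩
  have hgint : ∀ (ρ : Measure X) [IsProbabilityMeasure ρ], Integrable g ρ := fun ρ _ =>
    integrable_of_bdd hg hC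
  have hhint : ∀ (ρ : Measure X) [IsProbabilityMeasure ρ], Integrable h ρ := fun ρ _ =>
    integrable_of_bdd hh hhabs
  have e1 : ∫ y, h y ∂ν = kact P t g x + C := by
    simp only [hh_def]
    rw [integral_add (hgint ν) (integrable_const C)]
    simp [kact, hν]
  have e2 : ∫ y, h y ∂μ = C := by
    simp only [hh_def]
    rw [integral_add (hgint μ) (integrable_const C)]
    simp [hg0]
  set Fν : ℝ → ℝ := fun s => (ν {a | s < h a}).toReal with hFν
  set Fμ : ℝ → ℝ := fun s => (μ {a | s < h a}).toReal with hFμ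
  have hmeas : ∀ (ρ : Measure X), Measurable fun s : ℝ => (ρ {a | s < h a}).toReal := by
    intro ρ
    refine Measurable.ennreal_toReal ?_
    exact Antitone.measurable fun s₁ s₂ hle => measure_mono fun a ha => lt_of_le_of_lt hle ha
  have hzero : ∀ (ρ : Measure X) (s : ℝ), 2 * C < s → (ρ {a | s < h a}).toReal = 0 := by
    intro ρ s hs
    have : {a | s < h a} = (∅ : Set X) := by
      ext a; simp only [Set.mem_setOf_eq, Set.mem_empty_iff_false, iff_false, not_lt]
      exact (hhb a).trans hs.le
    rw [this]; simp
  have hle1 : ∀ (ρ : Measure X) [IsProbabilityMeasure ρ] (s : ℝ),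
      (ρ {a | s < h a}).toReal ≤ 1 := by
    intro ρ _ s
    have := prob_le_one (μ := ρ) (s := {a | s < h a})
    exact ENNReal.toReal_le_of_le_ofReal zero_le_one (by simpa using this)
  have hind_int : Integrable ((Set.Ioc (0:ℝ) (2*C)).indicator fun _ => (1:ℝ))
      (volume.restrict (Set.Ioi 0)) := by
    rw [integrable_indicator_iff measurableSet_Ioc]
    exact integrableOn_const measure_Ioc_lt_top.ne
  have hFint : ∀ (ρ : Measure X) [IsProbabilityMeasure ρ],
      Integrable (fun s : ℝ => (ρ {a | s < h a}).toReal) (volume.restrict (Set.Ioi 0)) := by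
    intro ρ _
    refine hind_int.mono' (hmeas ρ).aestronglyMeasurable ?_
    refine (ae_restrict_iff' measurableSet_Ioi).2 (Filter.Eventually.of_forall fun s hs => ?_)
    rw [Real.norm_eq_abs, abs_of_nonneg ENNReal.toReal_nonneg]
    by_cases hs2 : s ≤ 2 * C
    · rw [Set.indicator_of_mem (Set.mem_Ioc.mpr ⟨hs, hs2⟩)]
      exact hle1 ρ s
    · rw [hzero ρ s (lt_of_not_ge hs2)]
      exact Set.indicator_nonneg (fun _ _ => zero_le_one) s
  have l1 : ∫ y, h y ∂ν = ∫ s in Set.Ioi (0:ℝ), Fν s :=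
    (hhint ν).integral_eq_integral_meas_lt (Filter.Eventually.of_forall hh0)
  have l2 : ∫ y, h y ∂μ = ∫ s in Set.Ioi (0:ℝ), Fμ s :=
    (hhint μ).integral_eq_integral_meas_lt (Filter.Eventually.of_forall hh0)
  have main : kact P t g x = ∫ s in Set.Ioi (0:ℝ), (Fν s - Fμ s) := by
    rw [integral_sub (hFint ν) (hFint μ), ← l1, ← l2, e1, e2]
    ring
  have habs : ∀ s ∈ Set.Ioi (0:ℝ),
      |Fν s - Fμ s| ≤ (Set.Ioc (0:ℝ) (2*C)).indicator (fun _ => q) s := by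
    intro s hs
    by_cases hs2 : s ≤ 2 * C
    · rw [Set.indicator_of_mem (Set.mem_Ioc.mpr ⟨hs, hs2⟩)]
      have hA : MeasurableSet {a | s < h a} := measurableSet_lt measurable_const hh
      simpa [hFν, hFμ, hν, hq] using hmix x t {a | s < h a} hA
    · rw [Set.indicator_of_notMem (fun hmem => hs2 (Set.mem_Ioc.mp hmem).2)]
      simp only [hFν, hFμ]
      rw [hzero ν s (lt_of_not_ge hs2), hzero μ s (lt_of_not_ge hs2)]
      simp
  have hind_int2 : Integrable ((Set.Ioc (0:ℝ) (2*C)).indicator fun _ => q)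
      (volume.restrict (Set.Ioi 0)) := by
    rw [integrable_indicator_iff measurableSet_Ioc]
    exact integrableOn_const measure_Ioc_lt_top.ne
  have hcalc : ∫ s in Set.Ioi (0:ℝ), (Set.Ioc (0:ℝ) (2*C)).indicator (fun _ => q) s
      = 2 * C * q := by
    rw [integral_indicator measurableSet_Ioc]
    rw [Measure.restrict_restrict measurableSet_Ioc]
    have : Set.Ioc (0:ℝ) (2*C) ∩ Set.Ioi 0 = Set.Ioc (0:ℝ) (2*C) := by
      ext s; simp only [Set.mem_inter_iff, Set.mem_Ioc, Set.mem_Ioi, and_iff_left_iff_imp]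
      exact fun hs => hs.1
    rw [this, setIntegral_const, measureReal_def, Real.volume_Ioc, smul_eq_mul]
    rw [ENNReal.toReal_ofReal (by linarith)]
    ring
  calc |kact P t g x| = |∫ s in Set.Ioi (0:ℝ), (Fν s - Fμ s)| := by rw [main]
    _ ≤ ∫ s in Set.Ioi (0:ℝ), |Fν s - Fμ s| := by
        simpa [Real.norm_eq_abs] using
          norm_integral_le_integral_norm (μ := volume.restrict (Set.Ioi 0))
            (fun s => Fν s - Fμ s)
    _ ≤ ∫ s in Set.Ioi (0:ℝ), (Set.Ioc (0:ℝ) (2*C)).indicator (fun _ => q) s := by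
        refine integral_mono_ae ((hFint ν).sub (hFint μ)).abs hind_int2 ?_
        exact (ae_restrict_iff' measurableSet_Ioi).2 (Filter.Eventually.of_forall habs)
    _ = 2 * C * q := hcalc

end Main

/-- under the uniform mixing bound `‖Pᵗ(·|x) - μ‖_TV ≤ 2 (1 - 1/τ)ᵗ`
(equivalently, `|Pᵗ(A|x) - μ(A)| ≤ (1 - 1/τ)ᵗ` for all measurable `A`), any bounded
measurable `g` with `μ(g) = 0`, `‖g‖_∞ ≤ C` and `‖g‖_μ > 0` satisfies
`∑_{t≥0} ‖Pᵗ g‖_μ ≤ τ ‖g‖_μ (2 + log(C / ‖g‖_μ))`. -/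
theorem stmt7 {X : Type*} [MeasurableSpace X] (μ : Measure X) [IsProbabilityMeasure μ]
    (P : Kernel X X) [IsMarkovKernel P] (hstat : μ.bind (fun x => P x) = μ)
    (τ : ℝ) (hτ : 1 ≤ τ)
    (hmix : ∀ (x : X) (t : ℕ) (A : Set X), MeasurableSet A →
      |((kpow P t) x A).toReal - (μ A).toReal| ≤ (1 - 1 / τ) ^ t)
    (g : X → ℝ) (hg : Measurable g) (hg0 : ∫ x, g x ∂μ = 0)
    (C : ℝ) (hC : ∀ x, |g x| ≤ C)
    (hgμ : 0 < ∫ x, (g x) ^ 2 ∂μ) :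
    ∑' t : ℕ, Real.sqrt (∫ x, (kact P t g x) ^ 2 ∂μ)
      ≤ τ * Real.sqrt (∫ x, (g x) ^ 2 ∂μ) *
          (2 + Real.log (C / Real.sqrt (∫ x, (g x) ^ 2 ∂μ))) := by
  have hτ0 : 0 < τ := lt_of_lt_of_le one_pos hτ
  set q : ℝ := 1 - 1 / τ with hqdef
  have hq0 : 0 ≤ q := by
    have : 1 / τ ≤ 1 := (div_le_one hτ0).2 hτ
    simp only [hqdef]; linarith
  have hq1 : q < 1 := by
    have : 0 < 1 / τ := by positivity
    simp only [hqdef]; linarith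
  have hX : Nonempty X := by
    by_contra hX
    have h1 : (Set.univ : Set X) = ∅ := Set.univ_eq_empty_iff.2 (not_nonempty_iff.1 hX)
    have h2 : μ Set.univ = 1 := measure_univ
    rw [h1] at h2
    simp at h2
  have hC0 : 0 ≤ C := le_trans (abs_nonneg _) (hC (Classical.arbitrary X))
  set N : ℝ := Real.sqrt (∫ x, (g x) ^ 2 ∂μ) with hN
  have hN0 : 0 < N := Real.sqrt_pos.2 hgμ
  have hb2 : ∀ y, |(g y) ^ 2| ≤ C ^ 2 := by
    intro y
    have h1 := hC y
    have h2 := abs_nonneg (g y)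
    rw [abs_pow]
    nlinarith
  have hNC : N ≤ C := by
    have h1 : ∫ x, (g x) ^ 2 ∂μ ≤ C ^ 2 := by
      have := integral_mono (μ := μ) (integrable_of_bdd (hg.pow_const 2) hb2)
        (integrable_const (C ^ 2)) (fun x => (le_abs_self _).trans (hb2 x))
      simpa using this
    calc N ≤ Real.sqrt (C ^ 2) := Real.sqrt_le_sqrt h1
      _ = C := by rw [Real.sqrt_sq hC0]
  have hCpos : 0 < C := lt_of_lt_of_le hN0 hNC
  set a : ℕ → ℝ := fun t => Real.sqrt (∫ x, (kact P t g x) ^ 2 ∂μ) with ha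
  have ha_nonneg : ∀ t, 0 ≤ a t := fun t => Real.sqrt_nonneg _
  have haN : ∀ t, a t ≤ N := fun t =>
    Real.sqrt_le_sqrt (kact_sq_integral_le P μ hstat t hg hC)
  have haC : ∀ t, a t ≤ 2 * C * q ^ t := by
    intro t
    have hbd : ∀ x, (kact P t g x) ^ 2 ≤ (2 * C * q ^ t) ^ 2 := by
      intro x
      have h1 := kact_abs_le_mix P μ hτ hmix hg hg0 hC hC0 t x
      have h2 := abs_nonneg (kact P t g x)
      calc (kact P t g x) ^ 2 = |kact P t g x| ^ 2 := (sq_abs _).symm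
        _ ≤ (2 * C * q ^ t) ^ 2 := by nlinarith
    have hkb : ∀ x, |(kact P t g x) ^ 2| ≤ C ^ 2 := by
      intro x
      have h1 := kact_abs_le P t hg hC x
      have h2 := abs_nonneg (kact P t g x)
      rw [abs_pow]
      nlinarith
    have hint : ∫ x, (kact P t g x) ^ 2 ∂μ ≤ (2 * C * q ^ t) ^ 2 := by
      have := integral_mono (μ := μ)
        (integrable_of_bdd ((kact_measurable P t hg).pow_const 2) hkb)
        (integrable_const _) hbd
      simpa using this
    calc a t ≤ Real.sqrt ((2 * C * q ^ t) ^ 2) := Real.sqrt_le_sqrt hint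
      _ = 2 * C * q ^ t := Real.sqrt_sq (by positivity)
  have hgeom : Summable (fun t : ℕ => 2 * C * q ^ t) :=
    (summable_geometric_of_lt_one hq0 hq1).mul_left (2 * C)
  have hsummable : Summable a := Summable.of_nonneg_of_le ha_nonneg haC hgeom
  set L : ℝ := Real.log (C / N) with hL
  have hL0 : 0 ≤ L := Real.log_nonneg ((one_le_div hN0).2 hNC)
  set T : ℕ := ⌈τ * L⌉₊ with hT
  have hsplit := hsummable.sum_add_tsum_nat_add T
  rw [← hsplit]
  have head : ∑ i ∈ Finset.range T, a i ≤ T * N := by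
    calc ∑ i ∈ Finset.range T, a i ≤ ∑ _i ∈ Finset.range T, N :=
          Finset.sum_le_sum fun i _ => haN i
      _ = T * N := by simp [Finset.sum_const, nsmul_eq_mul]
  have htail : ∑' i : ℕ, a (i + T) ≤ 2 * C * τ * q ^ T := by
    have hs2 : Summable (fun i : ℕ => 2 * C * q ^ T * q ^ i) :=
      (summable_geometric_of_lt_one hq0 hq1).mul_left _
    have hle : ∀ i : ℕ, a (i + T) ≤ 2 * C * q ^ T * q ^ i := by
      intro i
      calc a (i + T) ≤ 2 * C * q ^ (i + T) := haC (i + T)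
        _ = 2 * C * q ^ T * q ^ i := by rw [pow_add]; ring
    calc ∑' i : ℕ, a (i + T)
        ≤ ∑' i : ℕ, 2 * C * q ^ T * q ^ i :=
          ((summable_nat_add_iff T).2 hsummable).tsum_le_tsum hle hs2
      _ = 2 * C * q ^ T * (1 - q)⁻¹ := by
          rw [tsum_mul_left, tsum_geometric_of_lt_one hq0 hq1]
      _ = 2 * C * τ * q ^ T := by
          have h1q : 1 - q = 1 / τ := by simp [hqdef]
          rw [h1q, one_div, inv_inv]
          ring
  -- arithmetic endgame
  set u : ℝ := ((T : ℝ) - τ * L) / τ with hu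
  have hTl : τ * L ≤ (T : ℝ) := Nat.le_ceil _
  have hTu : (T : ℝ) < τ * L + 1 := Nat.ceil_lt_add_one (by positivity)
  have hu0 : 0 ≤ u := div_nonneg (by linarith) hτ0.le
  have hu1 : u ≤ 1 := by
    rw [hu, div_le_one hτ0]
    linarith
  have hTeq : (T : ℝ) = τ * L + τ * u := by
    rw [hu]
    field_simp
    ring
  have hqe : q ≤ Real.exp (-(1 / τ)) := by
    have := Real.add_one_le_exp (-(1 / τ))
    simp only [hqdef]
    linarith
  have hqT : q ^ T ≤ Real.exp (-((T : ℝ) / τ)) := by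
    calc q ^ T ≤ (Real.exp (-(1 / τ))) ^ T := pow_le_pow_left₀ hq0 hqe T
      _ = Real.exp (-((T : ℝ) / τ)) := by
          rw [← Real.exp_nat_mul]
          congr 1
          ring
  have hexp_split : Real.exp (-((T : ℝ) / τ)) = (N / C) * Real.exp (-u) := by
    have hNCpos : 0 < N / C := div_pos hN0 hCpos
    rw [← Real.exp_log hNCpos, ← Real.exp_add]
    congr 1
    have hlog : Real.log (N / C) = -L := by
      rw [hL, ← Real.log_inv]
      congr 1
      rw [inv_div]
    rw [hlog, hu]
    field_simp
    ring
  have htail2 : 2 * C * τ * q ^ T ≤ 2 * τ * N * Real.exp (-u) := by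
    have h1 : 2 * C * τ * q ^ T ≤ 2 * C * τ * ((N / C) * Real.exp (-u)) := by
      rw [← hexp_split]
      exact mul_le_mul_of_nonneg_left hqT (by positivity)
    have h2 : 2 * C * τ * ((N / C) * Real.exp (-u)) = 2 * τ * N * Real.exp (-u) := by
      field_simp
    linarith
  have hexpu : Real.exp (-u) * (1 + u) ≤ 1 := by
    have h1 : 1 + u ≤ Real.exp u := by
      have := Real.add_one_le_exp u
      linarith
    calc Real.exp (-u) * (1 + u) ≤ Real.exp (-u) * Real.exp u :=
          mul_le_mul_of_nonneg_left h1 (Real.exp_pos _).le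
      _ = 1 := by rw [← Real.exp_add]; simp
  have hfinal : (T : ℝ) * N + 2 * τ * N * Real.exp (-u) ≤ τ * N * (2 + L) := by
    rw [hTeq]
    have he0 : 0 < Real.exp (-u) := Real.exp_pos _
    nlinarith [mul_nonneg hu0 (sub_nonneg.2 hu1), mul_pos hτ0 hN0,
      mul_nonneg (mul_pos hτ0 hN0).le (mul_nonneg hu0 (sub_nonneg.2 hu1))]
  calc ∑ i ∈ Finset.range T, a i + ∑' i : ℕ, a (i + T)
      ≤ (T : ℝ) * N + 2 * C * τ * q ^ T := add_le_add head htail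
    _ ≤ (T : ℝ) * N + 2 * τ * N * Real.exp (-u) := by linarith
    _ ≤ τ * N * (2 + L) := hfinal
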